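/- arXiv:1608.06014 — 3 statements merged into one kernel-verified Lean document; each statement's English description precedes it below -/
import Mathlib

section
/- If z_1, z_2 ∈ ℝ^n satisfy ‖z_1‖ = ‖z_2‖ and proj_𝒩(z_1) = proj_𝒩(z_2), then μ̄(z_1) = μ̄(z_2). -/
open RealInnerProductSpace Set

/-!
The reflection of `ℝⁿ` in the hyperplane `(z₁ - z₂)ᗮ` swaps `z₁` and `z₂` (they have the same
norm), and it fixes every normal `n_k` because `z₁ - z₂ ⟂ 𝒩`. Being a linear isometry, it maps the
intersection of the domes onto itself, so the two linear functionals `⟪·, z₁⟫` and `⟪·, z₂⟫` take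
the same set of values on it.
-/

variable {E : Type*} [NormedAddCommGroup E] [InnerProductSpace ℝ E]

def dome (a : E) (c : ℝ) : Set E := {z | ‖z‖ ≤ 1 ∧ ⟪a, z⟫ + c ≤ 0}

theorem LinearIsometryEquiv.mapsTo_dome {T : E ≃ₗᵢ[ℝ] E} {a : E} (ha : T a = a) (c : ℝ) :
    MapsTo T (dome a c) (dome a c) := by
  rintro z ⟨hz_norm, hz_half⟩
  refine ⟨by rwa [T.norm_map], ?_⟩
  rwa [← ha, T.inner_map_map]

theorem image_inner_subset_image_inner_map {S : Set E} {T : E ≃ₗᵢ[ℝ] E} (hS : MapsTo T S S)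
    (b : E) : (fun z => ⟪z, b⟫) '' S ⊆ (fun z => ⟪z, T b⟫) '' S := by
  rintro _ ⟨z, hz, rfl⟩
  exact ⟨T z, hS hz, T.inner_map_map z b⟩

theorem Submodule.reflection_orthogonal_sub_eq_self {K : Submodule ℝ E} {z₁ z₂ v : E}
    (hz : z₁ - z₂ ∈ Kᗮ) (hv : v ∈ K) : reflection (ℝ ∙ (z₁ - z₂))ᗮ v = v := by
  apply reflection_mem_subspace_eq_self
  exact mem_orthogonal_singleton_iff_inner_left.2 (inner_right_of_mem_orthogonal hv hz)

theorem image_inner_eq_of_norm_eq_of_sub_mem_orthogonal {K : Submodule ℝ E} {S : Set E}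
    (hS : ∀ T : E ≃ₗᵢ[ℝ] E, (∀ v ∈ K, T v = v) → MapsTo T S S) {z₁ z₂ : E}
    (hnorm : ‖z₁‖ = ‖z₂‖) (hz : z₁ - z₂ ∈ Kᗮ) :
    (fun z => ⟪z, z₁⟫) '' S = (fun z => ⟪z, z₂⟫) '' S := by
  set R := Submodule.reflection (ℝ ∙ (z₁ - z₂))ᗮ
  have hR₁ : R z₁ = z₂ := Submodule.reflection_sub hnorm
  have hR₂ : R z₂ = z₁ := by rw [← hR₁, Submodule.reflection_reflection]
  have hRS : MapsTo R S S :=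
    hS R fun v hv => Submodule.reflection_orthogonal_sub_eq_self hz hv
  refine subset_antisymm ?_ ?_
  · simpa only [hR₁] using image_inner_subset_image_inner_map hRS z₁
  · simpa only [hR₂] using image_inner_subset_image_inner_map hRS z₂

theorem sub_mem_orthogonal_of_orthogonalProjectionOnto_eq {K : Submodule ℝ E}
    [K.HasOrthogonalProjection] {x y : E}
    (h : K.orthogonalProjectionOnto x = K.orthogonalProjectionOnto y) : x - y ∈ Kᗮ := by
  rw [← Submodule.orthogonalProjectionOnto_eq_zero_iff, map_sub, h, sub_self]

theorem stmt_11_general (n m : ℕ) (nv : Fin m → EuclideanSpace ℝ (Fin n))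
    (ψ : Fin m → ℝ)
    (z₁ z₂ : EuclideanSpace ℝ (Fin n))
    (hnorm : ‖z₁‖ = ‖z₂‖)
    (hproj : Submodule.orthogonalProjectionOnto (Submodule.span ℝ (Set.range nv)) z₁ =
      Submodule.orthogonalProjectionOnto (Submodule.span ℝ (Set.range nv)) z₂) :
    sSup ((fun z => ⟪z, z₁⟫) ''
        ⋂ k, {z : EuclideanSpace ℝ (Fin n) | ‖z‖ ≤ 1 ∧ ⟪nv k, z⟫ + ψ k ≤ 0}) =
      sSup ((fun z => ⟪z, z₂⟫) ''
        ⋂ k, {z : EuclideanSpace ℝ (Fin n) | ‖z‖ ≤ 1 ∧ ⟪nv k, z⟫ + ψ k ≤ 0}) := by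
  have hdomes : ∀ T : EuclideanSpace ℝ (Fin n) ≃ₗᵢ[ℝ] EuclideanSpace ℝ (Fin n),
      (∀ v ∈ Submodule.span ℝ (Set.range nv), T v = v) →
        MapsTo T (⋂ k, dome (nv k) (ψ k)) (⋂ k, dome (nv k) (ψ k)) := fun T hT =>
    mapsTo_iInter_iInter fun k =>
      T.mapsTo_dome (hT _ (Submodule.subset_span (mem_range_self k))) (ψ k)
  exact congrArg sSup <| image_inner_eq_of_norm_eq_of_sub_mem_orthogonal hdomes hnorm
    (sub_mem_orthogonal_of_orthogonalProjectionOnto_eq hproj)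

/-- If `‖z_1‖ = ‖z_2‖` and `proj_𝒩 z_1 = proj_𝒩 z_2`, then `μ̄(z_1) = μ̄(z_2)`,
where `μ̄(b) = sup {⟪z, b⟫ : z ∈ ⋂_k D_k}`. -/
theorem stmt_11 (n m : ℕ) (nv : Fin m → EuclideanSpace ℝ (Fin n))
    (hnv : ∀ k, ‖nv k‖ = 1) (ψ : Fin m → ℝ)
    (z₁ z₂ : EuclideanSpace ℝ (Fin n))
    (hnorm : ‖z₁‖ = ‖z₂‖)
    (hproj : Submodule.orthogonalProjectionOnto (Submodule.span ℝ (Set.range nv)) z₁ =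
      Submodule.orthogonalProjectionOnto (Submodule.span ℝ (Set.range nv)) z₂) :
    sSup ((fun z => ⟪z, z₁⟫) ''
        ⋂ k, {z : EuclideanSpace ℝ (Fin n) | ‖z‖ ≤ 1 ∧ ⟪nv k, z⟫ + ψ k ≤ 0}) =
      sSup ((fun z => ⟪z, z₂⟫) ''
        ⋂ k, {z : EuclideanSpace ℝ (Fin n) | ‖z‖ ≤ 1 ∧ ⟪nv k, z⟫ + ψ k ≤ 0}) :=
  stmt_11_general n m nv ψ z₁ z₂ hnorm hproj
end

section
/- Let v_1,…,v_m be an orthonormal basis of the subspace 𝒩 = span{n_1,…,n_m} (assume dim 𝒩 = m), let A be the m×m matrix with entries A_{kj} = ⟪n_k, v_j⟫, and for b ∈ ℝ^n with ‖b‖ = 1 let t_b = (⟪v_1, b⟫,…,⟪v_m, b⟫) ∈ ℝ^m. Define k(x) = √(1 − ‖x‖²) for ‖x‖ ≤ 1. Then for every b ∈ ℝ^n with ‖b‖ = 1 and b ∉ 𝒩, the value μ̄(b) = sup{⟪z, b⟫ : ‖z‖ ≤ 1 and ⟪n_k, z⟫ + ψ_k ≤ 0 for k = 1,…,m} equals sup{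 t^T t_b + k(t)·k(t_b) : t ∈ ℝ^m, ‖t‖ ≤ 1, and (A t)_k + ψ_k ≤ 0 for k = 1,…,m }. -/
/-!
Let `P` be the orthogonal projection onto `𝒩 = span v` and `t = (⟪v_j, z⟫)_j` the coordinates of
`P z`. The constraints `⟪n_k, z⟫ + ψ_k ≤ 0` only see `t`, and `⟪z, b⟫ = ⟪t, t_b⟫ + ⟪z - P z, b - P b⟫`.
By Pythagoras `‖z - P z‖ ≤ k(t)` and `‖b - P b‖ = k(t_b)`, so Cauchy–Schwarz bounds the second
term by `k(t) k(t_b)`, with equality when `z - P z` is the multiple of `b - P b` of norm `k(t)`.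
-/

open RealInnerProductSpace

variable {E ι : Type*} [NormedAddCommGroup E] [InnerProductSpace ℝ E]

def innerCoords (v : ι → E) (x : E) : EuclideanSpace ℝ ι := WithLp.toLp 2 fun j => ⟪v j, x⟫

@[simp]
lemma innerCoords_apply (v : ι → E) (x : E) (j : ι) : innerCoords v x j = ⟪v j, x⟫ := rfl

lemma innerCoords_sub (v : ι → E) (x y : E) :
    innerCoords v (x - y) = innerCoords v x - innerCoords v y := by
  ext j
  simp [inner_sub_right]

variable [Fintype ι]

def orthoProj (v : ι → E) (x : E) : E := ∑ j, innerCoords v x j • v j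

lemma inner_sum_smul_left (v : ι → E) (t : EuclideanSpace ℝ ι) (y : E) :
    ⟪∑ j, t j • v j, y⟫ = ⟪t, innerCoords v y⟫ := by
  simp [sum_inner, real_inner_smul_left, PiLp.inner_apply, mul_comm]

namespace Orthonormal

variable {v : ι → E}

lemma innerCoords_sum_smul (hv : Orthonormal ℝ v) (t : EuclideanSpace ℝ ι) :
    innerCoords v (∑ j, t j • v j) = t := by
  ext j
  exact hv.inner_right_fintype _ j

lemma innerCoords_sub_orthoProj (hv : Orthonormal ℝ v) (y : E) :
    innerCoords v (y - orthoProj v y) = 0 := by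
  rw [orthoProj, innerCoords_sub, hv.innerCoords_sum_smul, sub_self]

lemma inner_sum_smul_sub_orthoProj (hv : Orthonormal ℝ v) (t : EuclideanSpace ℝ ι) (y : E) :
    ⟪∑ j, t j • v j, y - orthoProj v y⟫ = 0 := by
  rw [inner_sum_smul_left, hv.innerCoords_sub_orthoProj, inner_zero_right]

lemma inner_eq_inner_innerCoords_add (hv : Orthonormal ℝ v) (x y : E) :
    ⟪x, y⟫ = ⟪innerCoords v x, innerCoords v y⟫ + ⟪x - orthoProj v x, y - orthoProj v y⟫ := by
  have hPP : ⟪orthoProj v x, orthoProj v y⟫ = ⟪innerCoords v x, innerCoords v y⟫ := by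
    rw [orthoProj, inner_sum_smul_left, orthoProj, hv.innerCoords_sum_smul]
  have hxy : ⟪orthoProj v x, y - orthoProj v y⟫ = 0 := hv.inner_sum_smul_sub_orthoProj _ y
  have hyx : ⟪x - orthoProj v x, orthoProj v y⟫ = 0 := by
    rw [real_inner_comm]; exact hv.inner_sum_smul_sub_orthoProj _ x
  calc ⟪x, y⟫ = ⟪orthoProj v x + (x - orthoProj v x), orthoProj v y + (y - orthoProj v y)⟫ := by
        simp only [add_sub_cancel]
    _ = _ := by simp only [inner_add_left, inner_add_right, hPP, hxy, hyx]; ring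

lemma norm_sub_orthoProj (hv : Orthonormal ℝ v) (x : E) :
    ‖x - orthoProj v x‖ = √(‖x‖ ^ 2 - ‖innerCoords v x‖ ^ 2) := by
  have h := hv.inner_eq_inner_innerCoords_add x x
  simp only [real_inner_self_eq_norm_sq] at h
  rw [h, add_sub_cancel_left, Real.sqrt_sq (norm_nonneg _)]

lemma inner_le_of_norm_le_one (hv : Orthonormal ℝ v) {x y : E} (hx : ‖x‖ ≤ 1) (hy : ‖y‖ ≤ 1) :
    ⟪x, y⟫ ≤ ⟪innerCoords v x, innerCoords v y⟫ +
      √(1 - ‖innerCoords v x‖ ^ 2) * √(1 - ‖innerCoords v y‖ ^ 2) := by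
  have hres {z : E} (hz : ‖z‖ ≤ 1) : ‖z - orthoProj v z‖ ≤ √(1 - ‖innerCoords v z‖ ^ 2) := by
    rw [hv.norm_sub_orthoProj]
    gcongr
    exact pow_le_one₀ (norm_nonneg z) hz
  rw [hv.inner_eq_inner_innerCoords_add x y]
  gcongr
  calc _ ≤ ‖x - orthoProj v x‖ * ‖y - orthoProj v y‖ := real_inner_le_norm _ _
    _ ≤ _ := mul_le_mul (hres hx) (hres hy) (norm_nonneg _) (Real.sqrt_nonneg _)

lemma exists_innerCoords_eq (hv : Orthonormal ℝ v) {t : EuclideanSpace ℝ ι} (ht : ‖t‖ ≤ 1)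
    (y : E) : ∃ x : E, ‖x‖ ≤ 1 ∧ innerCoords v x = t ∧
      ⟪x, y⟫ = ⟪t, innerCoords v y⟫ + √(1 - ‖t‖ ^ 2) * ‖y - orthoProj v y‖ := by
  set w := y - orthoProj v y
  set s := √(1 - ‖t‖ ^ 2)
  have hs : s ^ 2 = 1 - ‖t‖ ^ 2 := Real.sq_sqrt (by nlinarith [norm_nonneg t])
  have hw (j : ι) : ⟪v j, w⟫ = 0 := by
    simpa using congrArg (· j) (hv.innerCoords_sub_orthoProj y)
  -- if `w = 0` then `‖w‖⁻¹ = 0` and the orthogonal part vanishes, which is still optimal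
  set x := ∑ j, t j • v j + (s * ‖w‖⁻¹) • w
  have hcx : innerCoords v x = t := by
    ext j
    simp [x, inner_add_right, real_inner_smul_right, hv.inner_right_fintype, hw j]
  have hres : x - orthoProj v x = (s * ‖w‖⁻¹) • w := by
    rw [orthoProj, hcx, add_sub_cancel_left]
  have hxx := hv.inner_eq_inner_innerCoords_add x x
  have hxy := hv.inner_eq_inner_innerCoords_add x y
  rw [hcx, hres] at hxx hxy
  refine ⟨x, ?_, hcx, ?_⟩
  · have hr : ‖(s * ‖w‖⁻¹) • w‖ ≤ s := by
      rw [norm_smul, Real.norm_of_nonneg (by positivity), mul_assoc]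
      exact mul_le_of_le_one_right (Real.sqrt_nonneg _) inv_mul_le_one
    simp only [real_inner_self_eq_norm_sq] at hxx
    have : ‖x‖ ^ 2 ≤ 1 := by nlinarith [norm_nonneg ((s * ‖w‖⁻¹) • w)]
    exact (sq_le_one_iff₀ (norm_nonneg x)).mp this
  · rw [hxy, real_inner_smul_left, real_inner_self_eq_norm_sq, mul_assoc, sq, ← mul_assoc ‖w‖⁻¹,
      inv_mul_mul_self]

lemma norm_innerCoords_le (hv : Orthonormal ℝ v) (x : E) : ‖innerCoords v x‖ ≤ ‖x‖ := by
  have h := hv.inner_eq_inner_innerCoords_add x x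
  simp only [real_inner_self_eq_norm_sq] at h
  exact (sq_le_sq₀ (norm_nonneg _) (norm_nonneg _)).mp (by nlinarith)

lemma inner_eq_sum_of_mem_span (hv : Orthonormal ℝ v) {u : E}
    (hu : u ∈ Submodule.span ℝ (Set.range v)) (x : E) :
    ⟪u, x⟫ = ∑ j, ⟪u, v j⟫ * ⟪v j, x⟫ := by
  obtain ⟨c, rfl⟩ := (Submodule.mem_span_range_iff_exists_fun ℝ).mp hu
  have h := hv.inner_sum_smul_sub_orthoProj (WithLp.toLp 2 c) x
  rw [inner_sub_right, sub_eq_zero] at h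
  rw [h, orthoProj, inner_sum]
  simp [real_inner_smul_right, mul_comm]

theorem sSup_inner_eq_sSup_innerCoords (hv : Orthonormal ℝ v) (C : Set (EuclideanSpace ℝ ι))
    {y : E} (hy : ‖y‖ = 1) :
    sSup ((fun x => ⟪x, y⟫) '' {x | ‖x‖ ≤ 1 ∧ innerCoords v x ∈ C}) =
      sSup {s | ∃ t : EuclideanSpace ℝ ι, ‖t‖ ≤ 1 ∧ t ∈ C ∧
        s = ⟪t, innerCoords v y⟫ + √(1 - ‖t‖ ^ 2) * √(1 - ‖innerCoords v y‖ ^ 2)} := by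
  refine csSup_eq_csSup_of_forall_exists_le ?_ ?_
  · rintro _ ⟨x, ⟨hx, hxC⟩, rfl⟩
    exact ⟨_, ⟨innerCoords v x, (hv.norm_innerCoords_le x).trans hx, hxC, rfl⟩,
      hv.inner_le_of_norm_le_one hx hy.le⟩
  · rintro _ ⟨t, ht, htC, rfl⟩
    obtain ⟨x, hx, hxt, hxy⟩ := hv.exists_innerCoords_eq ht y
    refine ⟨⟪x, y⟫, ⟨x, ⟨hx, hxt ▸ htC⟩, rfl⟩, ge_of_eq ?_⟩
    rw [hxy, hv.norm_sub_orthoProj, hy, one_pow]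

end Orthonormal

theorem stmt_17_general (n m : ℕ) (nv : Fin m → EuclideanSpace ℝ (Fin n))
    (ψ : Fin m → ℝ)
    (v : Fin m → EuclideanSpace ℝ (Fin n))
    (hv : Orthonormal ℝ v)
    (hspan : Submodule.span ℝ (Set.range v) = Submodule.span ℝ (Set.range nv))
    (A : Matrix (Fin m) (Fin m) ℝ) (hA : ∀ k j, A k j = ⟪nv k, v j⟫)
    (b : EuclideanSpace ℝ (Fin n)) (hb : ‖b‖ = 1)
    (tb : EuclideanSpace ℝ (Fin m)) (htb : ∀ j, tb j = ⟪v j, b⟫) :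
    sSup ((fun z => ⟪z, b⟫) ''
        {z : EuclideanSpace ℝ (Fin n) | ‖z‖ ≤ 1 ∧ ∀ k, ⟪nv k, z⟫ + ψ k ≤ 0}) =
      sSup {s : ℝ | ∃ t : EuclideanSpace ℝ (Fin m), ‖t‖ ≤ 1 ∧
        (∀ k, (∑ j, A k j * t j) + ψ k ≤ 0) ∧
        s = ⟪t, tb⟫ + Real.sqrt (1 - ‖t‖ ^ 2) * Real.sqrt (1 - ‖tb‖ ^ 2)} := by
  obtain rfl : tb = innerCoords v b := by ext j; exact htb j
  have hnv (k : Fin m) : nv k ∈ Submodule.span ℝ (Set.range v) :=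
    hspan ▸ Submodule.subset_span ⟨k, rfl⟩
  have hinner_nv (k : Fin m) (z : EuclideanSpace ℝ (Fin n)) :
      ⟪nv k, z⟫ = ∑ j, A k j * innerCoords v z j := by
    rw [hv.inner_eq_sum_of_mem_span (hnv k)]
    simp only [hA, innerCoords_apply]
  simp only [hinner_nv]
  exact hv.sSup_inner_eq_sSup_innerCoords {t | ∀ k, ∑ j, A k j * t j + ψ k ≤ 0} hb

/-- Reduction of the core problem to dimension `m`: with `v_1,…,v_m` an
orthonormal basis of `𝒩`, `A_{kj} = ⟪n_k, v_j⟫`, `t_b = (⟪v_j, b⟫)_j`, and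
`k(x) = √(1 - ‖x‖²)`, for every unit-norm `b ∉ 𝒩`,
`μ̄(b) = sup { tᵀ t_b + k(t) k(t_b) : ‖t‖ ≤ 1, (A t)_k + ψ_k ≤ 0 }`. -/
theorem stmt_17 (n m : ℕ) (nv : Fin m → EuclideanSpace ℝ (Fin n))
    (hnv : ∀ k, ‖nv k‖ = 1) (ψ : Fin m → ℝ)
    (v : Fin m → EuclideanSpace ℝ (Fin n))
    (hv : Orthonormal ℝ v)
    (hspan : Submodule.span ℝ (Set.range v) = Submodule.span ℝ (Set.range nv))
    (A : Matrix (Fin m) (Fin m) ℝ) (hA : ∀ k j, A k j = ⟪nv k, v j⟫)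
    (b : EuclideanSpace ℝ (Fin n)) (hb : ‖b‖ = 1)
    (hbN : b ∉ Submodule.span ℝ (Set.range nv))
    (tb : EuclideanSpace ℝ (Fin m)) (htb : ∀ j, tb j = ⟪v j, b⟫) :
    sSup ((fun z => ⟪z, b⟫) ''
        {z : EuclideanSpace ℝ (Fin n) | ‖z‖ ≤ 1 ∧ ∀ k, ⟪nv k, z⟫ + ψ k ≤ 0}) =
      sSup {s : ℝ | ∃ t : EuclideanSpace ℝ (Fin m), ‖t‖ ≤ 1 ∧
        (∀ k, (∑ j, A k j * t j) + ψ k ≤ 0) ∧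
        s = ⟪t, tb⟫ + Real.sqrt (1 - ‖t‖ ^ 2) * Real.sqrt (1 - ‖tb‖ ^ 2)} :=
  stmt_17_general n m nv ψ v hv hspan A hA b hb tb htb
end

section
/- Let v_1,…,v_m be an orthonormal basis of the subspace 𝒩 = span{n_1,…,n_m} (assume dim 𝒩 = m), let A be the m×m matrix with entries A_{kj} = ⟪n_k, v_j⟫, and for b ∈ ℝ^n with ‖b‖ = 1 let t_b = (⟪v_1, b⟫,…,⟪v_m, b⟫) ∈ ℝ^m and t_b^e = (t_b, √(1 − ‖t_b‖²)) ∈ ℝ^{m+1}. Then for every b ∈ ℝ^n with ‖b‖ = 1 and b ∉ 𝒩, the value μ̄(b) = sup{⟪z, b⟫ : z ∈ ℝ^n, ‖z‖ ≤ 1 and ⟪n_k, z⟫ + ψ_k ≤ 0 for k = 1,…,m} equals sup{ ⟪t^e, t_b^e⟫ : t^e ∈ ℝ^{m+1}, ‖t^e‖ ≤ 1, and ([A 0] t^e)_k + ψ_k ≤ 0 for k = 1,…,m }, where [A 0] is the m×(m+1) matrix obtained by appending a zero column to A. -/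
/-!
Extend `v` by one Gram–Schmidt step applied to `b` (possible since `b ∉ 𝒩`) to an orthonormal
family `(v, u)` whose span `K` contains `b` and every `n_k`. Projecting onto `K` keeps a point
feasible and does not change `⟪z, b⟫`, so the supremum may be taken over `K`; coordinates in the
basis `(v, u)` identify `K` isometrically with `ℝ^{m+1}`, sending `b` to `t_b^e` (the last
coordinate is `‖b - P_𝒩 b‖ = √(1 - ‖t_b‖²)` by Pythagoras) and `n_k` to the `k`-th row of `[A 0]`.
-/

open RealInnerProductSpace

section FeasibleSet

variable {E F κ : Type*} [NormedAddCommGroup E] [InnerProductSpace ℝ E]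
  [NormedAddCommGroup F] [InnerProductSpace ℝ F]

def feasibleSet (a : κ → E) (ψ : κ → ℝ) : Set E :=
  {z | ‖z‖ ≤ 1 ∧ ∀ k, ⟪a k, z⟫ + ψ k ≤ 0}

theorem image_inner_feasibleSet_eq_subtype (K : Submodule ℝ E) [K.HasOrthogonalProjection]
    (a : κ → K) (ψ : κ → ℝ) (b : K) :
    (⟪·, (b : E)⟫) '' feasibleSet (fun k => (a k : E)) ψ = (⟪·, b⟫) '' feasibleSet a ψ := by
  apply subset_antisymm
  · rintro _ ⟨z, ⟨hz, hza⟩, rfl⟩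
    refine ⟨K.orthogonalProjectionOnto z, ⟨?_, fun k => ?_⟩, ?_⟩
    · exact (K.norm_orthogonalProjectionOnto_apply_le z).trans hz
    · simpa only [Submodule.inner_orthogonalProjectionOnto_eq_of_mem_left] using hza k
    · exact Submodule.inner_orthogonalProjectionOnto_eq_of_mem_right b z
  · rintro _ ⟨z, hz, rfl⟩
    exact ⟨z, hz, rfl⟩

theorem image_inner_feasibleSet_map (L : E ≃ₗᵢ[ℝ] F) (a : κ → E) (ψ : κ → ℝ) (b : E) :
    (⟪·, b⟫) '' feasibleSet a ψ = (⟪·, L b⟫) '' feasibleSet (fun k => L (a k)) ψ := by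
  have hpre : feasibleSet a ψ = L ⁻¹' feasibleSet (fun k => L (a k)) ψ := by
    ext z
    simp only [feasibleSet, Set.mem_ofPred_eq, Set.mem_preimage, LinearIsometryEquiv.norm_map,
      LinearIsometryEquiv.inner_map_map]
  rw [← Set.image_preimage_eq (feasibleSet (fun k => L (a k)) ψ) L.surjective, ← hpre,
    Set.image_image]
  simp only [LinearIsometryEquiv.inner_map_map]

end FeasibleSet

section Orthonormal

variable {𝕜 E ι : Type*} [RCLike 𝕜] [NormedAddCommGroup E] [InnerProductSpace 𝕜 E] [Fintype ι]

noncomputable def Orthonormal.orthonormalBasisSpan {v : ι → E} (hv : Orthonormal 𝕜 v) :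
    OrthonormalBasis ι 𝕜 (Submodule.span 𝕜 (Set.range v)) :=
  (Module.Basis.span hv.linearIndependent).toOrthonormalBasis <| by
    rw [show ⇑(Module.Basis.span hv.linearIndependent) = _ from
      funext (Module.Basis.span_apply hv.linearIndependent)]
    exact orthonormal_span hv

@[simp]
theorem Orthonormal.coe_orthonormalBasisSpan {v : ι → E} (hv : Orthonormal 𝕜 v) (i : ι) :
    (hv.orthonormalBasisSpan i : E) = v i := by
  simp [Orthonormal.orthonormalBasisSpan, Module.Basis.span_apply]

@[simp]
theorem Orthonormal.orthonormalBasisSpan_repr_apply {v : ι → E} (hv : Orthonormal 𝕜 v)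
    (x : Submodule.span 𝕜 (Set.range v)) (i : ι) :
    hv.orthonormalBasisSpan.repr x i = inner 𝕜 (v i) (x : E) := by
  rw [OrthonormalBasis.repr_apply_apply, Submodule.coe_inner, coe_orthonormalBasisSpan]

theorem Orthonormal.snoc {m : ℕ} {v : Fin m → E} (hv : Orthonormal 𝕜 v) {u : E} (hu : ‖u‖ = 1)
    (hvu : ∀ j, inner 𝕜 (v j) u = 0) : Orthonormal 𝕜 (Fin.snoc v u : Fin (m + 1) → E) := by
  refine ⟨fun i => ?_, fun i j hij => ?_⟩
  · induction i using Fin.lastCases <;> simp [hu, hv.norm_eq_one]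
  · induction i using Fin.lastCases <;> induction j using Fin.lastCases
    · exact absurd rfl hij
    · simpa using inner_eq_zero_symm.mp (hvu _)
    · simpa using hvu _
    · simpa using hv.inner_eq_zero fun h => hij (congrArg _ h)

end Orthonormal

instance Submodule.finiteDimensional_span_range {𝕜 V ι : Type*} [DivisionRing 𝕜]
    [AddCommGroup V] [Module 𝕜 V] [Finite ι] (v : ι → V) :
    FiniteDimensional 𝕜 (Submodule.span 𝕜 (Set.range v)) :=
  FiniteDimensional.span_of_finite 𝕜 (Set.finite_range v)

theorem Submodule.span_range_le_span_range_snoc {R M : Type*} [Semiring R] [AddCommMonoid M]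
    [Module R M] {m : ℕ} (v : Fin m → M) (u : M) :
    span R (Set.range v) ≤ span R (Set.range (Fin.snoc v u : Fin (m + 1) → M)) :=
  span_mono (Set.range_subset_iff.mpr fun j => ⟨j.castSucc, by simp⟩)

section GramSchmidt

variable {E : Type*} [NormedAddCommGroup E] [InnerProductSpace ℝ E] {ι : Type*} [Fintype ι]

theorem Orthonormal.norm_sq_eq_sum_sq_inner_add_norm_sq_sub_starProjection {v : ι → E}
    (hv : Orthonormal ℝ v) (x : E) :
    ‖x‖ ^ 2 = ∑ i, ⟪v i, x⟫ ^ 2 + ‖x - (Submodule.span ℝ (Set.range v)).starProjection x‖ ^ 2 := by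
  set N := Submodule.span ℝ (Set.range v)
  rw [N.norm_sq_eq_add_norm_sq_starProjection x, Submodule.starProjection_orthogonal_val,
    N.starProjection_apply, Submodule.norm_coe,
    ← hv.orthonormalBasisSpan.sum_sq_inner_right (N.orthogonalProjectionOnto x)]
  congr 2 with i
  rw [Submodule.inner_orthogonalProjectionOnto_eq_of_mem_left,
    Orthonormal.coe_orthonormalBasisSpan]

/-- One Gram–Schmidt step: the normalised residual of `b` modulo `span v`. -/
theorem Orthonormal.exists_orthonormal_snoc_of_notMem_span {m : ℕ} {v : Fin m → E}
    (hv : Orthonormal ℝ v) {b : E} (hb : b ∉ Submodule.span ℝ (Set.range v)) :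
    ∃ u ∈ (Submodule.span ℝ (Set.range v))ᗮ, Orthonormal ℝ (Fin.snoc v u : Fin (m + 1) → E) ∧
      ⟪u, b⟫ = √(‖b‖ ^ 2 - ∑ j, ⟪v j, b⟫ ^ 2) ∧
      b ∈ Submodule.span ℝ (Set.range (Fin.snoc v u : Fin (m + 1) → E)) := by
  set N := Submodule.span ℝ (Set.range v)
  set w := b - N.starProjection b
  have hwN : w ∈ Nᗮ := Submodule.sub_starProjection_mem_orthogonal b
  have hw0 : w ≠ 0 := fun h => hb (N.starProjection_eq_self_iff.mp (sub_eq_zero.mp h).symm)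
  have huN : ‖w‖⁻¹ • w ∈ Nᗮ := Nᗮ.smul_mem _ hwN
  refine ⟨‖w‖⁻¹ • w, huN, hv.snoc (norm_smul_inv_norm hw0) fun j => ?_, ?_, ?_⟩
  · exact Submodule.inner_right_of_mem_orthogonal (Submodule.subset_span (Set.mem_range_self j)) huN
  · have hwb : ⟪w, b⟫ = ‖w‖ ^ 2 := by
      conv_lhs => rw [← sub_add_cancel b (N.starProjection b)]
      rw [inner_add_right, real_inner_self_eq_norm_sq,
        Submodule.inner_left_of_mem_orthogonal (N.starProjection_apply_mem b) hwN, add_zero]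
    have hw2 : ‖w‖ ^ 2 = ‖b‖ ^ 2 - ∑ j, ⟪v j, b⟫ ^ 2 := by
      linarith [hv.norm_sq_eq_sum_sq_inner_add_norm_sq_sub_starProjection b]
    rw [real_inner_smul_left, hwb, ← hw2, Real.sqrt_sq (norm_nonneg w)]
    field_simp
  · have hu : ‖w‖⁻¹ • w ∈ Submodule.span ℝ (Set.range (Fin.snoc v (‖w‖⁻¹ • w) : Fin (m + 1) → E)) :=
      Submodule.subset_span ⟨Fin.last m, by simp⟩
    have := add_mem (Submodule.span_range_le_span_range_snoc v _ (N.starProjection_apply_mem b))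
      (Submodule.smul_mem _ ‖w‖ hu)
    rwa [smul_inv_smul₀ (norm_ne_zero_iff.mpr hw0), add_sub_cancel] at this

end GramSchmidt

theorem stmt_18_general (n m : ℕ) (nv : Fin m → EuclideanSpace ℝ (Fin n))
    (ψ : Fin m → ℝ)
    (v : Fin m → EuclideanSpace ℝ (Fin n))
    (hv : Orthonormal ℝ v)
    (hspan : Submodule.span ℝ (Set.range v) = Submodule.span ℝ (Set.range nv))
    (A : Matrix (Fin m) (Fin m) ℝ) (hA : ∀ k j, A k j = ⟪nv k, v j⟫)
    (b : EuclideanSpace ℝ (Fin n)) (hb : ‖b‖ = 1)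
    (hbN : b ∉ Submodule.span ℝ (Set.range nv))
    (tb : EuclideanSpace ℝ (Fin m)) (htb : ∀ j, tb j = ⟪v j, b⟫)
    (tbe : EuclideanSpace ℝ (Fin (m + 1)))
    (htbe : ∀ j : Fin m, tbe j.castSucc = tb j)
    (htbe' : tbe (Fin.last m) = Real.sqrt (1 - ‖tb‖ ^ 2)) :
    sSup ((fun z => ⟪z, b⟫) ''
        {z : EuclideanSpace ℝ (Fin n) | ‖z‖ ≤ 1 ∧ ∀ k, ⟪nv k, z⟫ + ψ k ≤ 0}) =
      sSup {s : ℝ | ∃ te : EuclideanSpace ℝ (Fin (m + 1)), ‖te‖ ≤ 1 ∧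
        (∀ k, (∑ j : Fin m, A k j * te j.castSucc) + ψ k ≤ 0) ∧
        s = ⟪te, tbe⟫} := by
  have hnN : ∀ k, nv k ∈ Submodule.span ℝ (Set.range v) :=
    fun k => hspan ▸ Submodule.subset_span ⟨k, rfl⟩
  obtain ⟨u, huN, he, hub, hbK⟩ := hv.exists_orthonormal_snoc_of_notMem_span (hspan ▸ hbN)
  set K := Submodule.span ℝ (Set.range (Fin.snoc v u : Fin (m + 1) → _))
  set B := he.orthonormalBasisSpan
  have hnK : ∀ k, nv k ∈ K := fun k => Submodule.span_range_le_span_range_snoc v u (hnN k)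
  have hBb : B.repr ⟨b, hbK⟩ = tbe := by
    ext i
    induction i using Fin.lastCases with
    | last => simp [B, hub, hb, htbe', EuclideanSpace.real_norm_sq_eq, htb]
    | cast j => simp [B, htbe, htb]
  have hBn : ∀ k (te : EuclideanSpace ℝ (Fin (m + 1))),
      ⟪B.repr ⟨nv k, hnK k⟩, te⟫ = ∑ j, A k j * te j.castSucc := by
    intro k te
    have hun : ⟪u, nv k⟫ = 0 := Submodule.inner_left_of_mem_orthogonal (hnN k) huN
    rw [EuclideanSpace.inner_eq_star_dotProduct, dotProduct, Fin.sum_univ_castSucc]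
    simp only [Pi.star_apply, star_trivial, B, he.orthonormalBasisSpan_repr_apply,
      Fin.snoc_castSucc, Fin.snoc_last, hun, hA, real_inner_comm, mul_zero, add_zero]
    exact Finset.sum_congr rfl fun _ _ => mul_comm _ _
  congr 1
  refine (image_inner_feasibleSet_eq_subtype K (fun k => ⟨nv k, hnK k⟩) ψ ⟨b, hbK⟩).trans ?_
  rw [image_inner_feasibleSet_map B.repr, hBb]
  ext s
  simp only [Set.mem_image, feasibleSet, Set.mem_ofPred_eq, hBn, and_assoc, @eq_comm ℝ s]

/-- Reduction of the core problem to dimension `m + 1`: with `v_1,…,v_m` an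
orthonormal basis of `𝒩`, `A_{kj} = ⟪n_k, v_j⟫`, `t_b = (⟪v_j, b⟫)_j` and
`t_b^e = (t_b, √(1 - ‖t_b‖²))`, for every unit-norm `b ∉ 𝒩`,
`μ̄(b) = sup { ⟪t^e, t_b^e⟫ : t^e ∈ ℝ^{m+1}, ‖t^e‖ ≤ 1, ([A 0] t^e)_k + ψ_k ≤ 0 }`. -/
theorem stmt_18 (n m : ℕ) (nv : Fin m → EuclideanSpace ℝ (Fin n))
    (hnv : ∀ k, ‖nv k‖ = 1) (ψ : Fin m → ℝ)
    (v : Fin m → EuclideanSpace ℝ (Fin n))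
    (hv : Orthonormal ℝ v)
    (hspan : Submodule.span ℝ (Set.range v) = Submodule.span ℝ (Set.range nv))
    (A : Matrix (Fin m) (Fin m) ℝ) (hA : ∀ k j, A k j = ⟪nv k, v j⟫)
    (b : EuclideanSpace ℝ (Fin n)) (hb : ‖b‖ = 1)
    (hbN : b ∉ Submodule.span ℝ (Set.range nv))
    (tb : EuclideanSpace ℝ (Fin m)) (htb : ∀ j, tb j = ⟪v j, b⟫)
    (tbe : EuclideanSpace ℝ (Fin (m + 1)))
    (htbe : ∀ j : Fin m, tbe j.castSucc = tb j)
    (htbe' : tbe (Fin.last m) = Real.sqrt (1 - ‖tb‖ ^ 2)) :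
    sSup ((fun z => ⟪z, b⟫) ''
        {z : EuclideanSpace ℝ (Fin n) | ‖z‖ ≤ 1 ∧ ∀ k, ⟪nv k, z⟫ + ψ k ≤ 0}) =
      sSup {s : ℝ | ∃ te : EuclideanSpace ℝ (Fin (m + 1)), ‖te‖ ≤ 1 ∧
        (∀ k, (∑ j : Fin m, A k j * te j.castSucc) + ψ k ≤ 0) ∧
        s = ⟪te, tbe⟫} :=
  stmt_18_general n m nv ψ v hv hspan A hA b hb hbN tb htb tbe htbe htbe'
end
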